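/- Let η_1, η_2, … be i.i.d. uniform on the ball U = B(z,r) ⊂ ℝ^d, let ε_1, ε_2, … be {0,1}-valued random variables independent of (η_j), let ψ(x) = r² − ‖x−z‖², and fix p ∈ ℕ, c > 0. Then for every k ≥ (2p+1)/c, E[ (∑_{j=1}^k ψ²(η_j) 1_{ε_j=1})^{-p} 1_{∑_{j=1}^k ε_j ≥ ck} ] ≤ C(c,ψ,p) k^{-p}, where C(c,ψ,p) is a constant not depending on k. -/

import Mathlib

/-!
Let `S` be the set of indices `j < k` with `ε j = 1`. On the event that `S` is a fixed set of size
`n ≥ c k ≥ 2p + 1`, AM-GM gives `(∑_{j ∈ S} ψ²(η_j))^{-p} ≤ n^{-p} ∏_{j ∈ S} ψ²(η_j)^{-p/n}`.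
The pattern of `ε` is independent of the i.i.d. `η_j`, so the expectation on that event factorises,
and by Jensen each factor is at most `K^{(2p+1)/n}` with `K = E[ψ²(η)^{-p/(2p+1)}]`. Summing over
the disjoint events gives the bound `(c k)^{-p} K^{2p+1}`. Finally `K < ∞` since `p/(2p+1) < 1/2`
and `P(ψ(η) < s) ≤ d s / r²`, the relative volume of a boundary shell of the ball.
-/

open MeasureTheory ProbabilityTheory
open scoped ENNReal

/-- The uniform distribution on the open ball `B(z,r)` in `ℝ^d`. -/
noncomputable def uniformBall (d : ℕ) (z : EuclideanSpace ℝ (Fin d)) (r : ℝ) :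
    Measure (EuclideanSpace ℝ (Fin d)) :=
  (volume (Metric.ball z r))⁻¹ • volume.restrict (Metric.ball z r)

open Finset in
theorem Real.rpow_neg_sum_le_card_rpow_mul_prod {ι : Type*} {s : Finset ι} (hs : s.Nonempty)
    {x : ι → ℝ} (hx : ∀ i ∈ s, 0 < x i) {p : ℝ} (hp : 0 ≤ p) :
    (∑ i ∈ s, x i) ^ (-p) ≤ (#s : ℝ) ^ (-p) * ∏ i ∈ s, x i ^ (-p / #s) := by
  have hn : (0 : ℝ) < #s := by exact_mod_cast hs.card_pos
  have hprod : 0 < ∏ i ∈ s, x i := prod_pos hx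
  have amgm : #s * (∏ i ∈ s, x i) ^ (#s : ℝ)⁻¹ ≤ ∑ i ∈ s, x i := by
    have := Real.geom_mean_le_arith_mean s (fun _ => 1) x (by simp) (by simpa using hn)
      fun i hi => (hx i hi).le
    simp only [Real.rpow_one, sum_const, nsmul_eq_mul, mul_one, one_mul] at this
    rwa [le_div_iff₀ hn, mul_comm] at this
  calc (∑ i ∈ s, x i) ^ (-p)
      ≤ (#s * (∏ i ∈ s, x i) ^ (#s : ℝ)⁻¹) ^ (-p) :=
        Real.rpow_le_rpow_of_nonpos (by positivity) amgm (by linarith)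
    _ = (#s : ℝ) ^ (-p) * ∏ i ∈ s, x i ^ (-p / #s) := by
        rw [Real.mul_rpow hn.le (by positivity), ← Real.rpow_mul hprod.le,
          ← Real.finsetProd_rpow s x fun i hi => (hx i hi).le, inv_mul_eq_div]

theorem lintegral_rpow_le_rpow_lintegral {α : Type*} [MeasurableSpace α] {μ : Measure α}
    [IsProbabilityMeasure μ] {f : α → ℝ≥0∞} (hf : AEMeasurable f μ) {a : ℝ} (ha0 : 0 < a)
    (ha1 : a ≤ 1) : ∫⁻ x, f x ^ a ∂μ ≤ (∫⁻ x, f x ∂μ) ^ a := by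
  have h := eLpNorm'_le_eLpNorm'_of_exponent_le ha0 ha1 μ hf.aestronglyMeasurable
  simp only [eLpNorm'_eq_lintegral_enorm, enorm_eq_self, ENNReal.rpow_one, div_one] at h
  calc ∫⁻ x, f x ^ a ∂μ = ((∫⁻ x, f x ^ a ∂μ) ^ (1 / a)) ^ a := by
        rw [← ENNReal.rpow_mul, one_div_mul_cancel ha0.ne', ENNReal.rpow_one]
    _ ≤ (∫⁻ x, f x ∂μ) ^ a := ENNReal.rpow_le_rpow h ha0.le

theorem Real.lt_rpow_neg_inv_of_lt_rpow_neg {β t y : ℝ} (hβ : 0 < β) (ht : 0 < t)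
    (h : t < y ^ (-β)) : y < t ^ (-β⁻¹) := by
  have hneg : -β⁻¹ < 0 := neg_lt_zero.mpr (inv_pos.mpr hβ)
  rcases lt_trichotomy y 0 with hy | rfl | hy
  · exact hy.trans (Real.rpow_pos_of_pos ht _)
  · rw [Real.zero_rpow (neg_ne_zero.mpr hβ.ne')] at h
    exact absurd h ht.not_gt
  · calc y = (y ^ (-β)) ^ (-β⁻¹) := by
          rw [← Real.rpow_mul hy.le, neg_mul_neg, mul_inv_cancel₀ hβ.ne', Real.rpow_one]
      _ < t ^ (-β⁻¹) := Real.rpow_lt_rpow_of_neg ht h hneg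

theorem lintegral_ofReal_rpow_neg_ne_top_of_measure_lt_le {α : Type*} [MeasurableSpace α]
    {μ : Measure α} [IsFiniteMeasure μ] {f : α → ℝ} (hf : AEMeasurable f μ) (hf0 : 0 ≤ᵐ[μ] f)
    {A γ β u₀ : ℝ} (hu₀ : 0 < u₀) (hβ : 0 ≤ β) (hβγ : β < γ)
    (htail : ∀ u ∈ Set.Ioo 0 u₀, μ {x | f x < u} ≤ ENNReal.ofReal (A * u ^ γ)) :
    ∫⁻ x, ENNReal.ofReal (f x ^ (-β)) ∂μ ≠ ∞ := by
  rcases hβ.eq_or_lt with rfl | hβ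
  · simp [measure_ne_top]
  set T := u₀ ^ (-β)
  have hT : 0 < T := Real.rpow_pos_of_pos hu₀ _
  have hlevel : ∀ t, T < t →
      μ {x | t < f x ^ (-β)} ≤ ENNReal.ofReal (A * t ^ (-β⁻¹ * γ)) := by
    intro t ht
    have ht0 : 0 < t := hT.trans ht
    have hneg : -β⁻¹ < 0 := neg_lt_zero.mpr (inv_pos.mpr hβ)
    have hu : t ^ (-β⁻¹) ∈ Set.Ioo 0 u₀ := by
      refine ⟨Real.rpow_pos_of_pos ht0 _, ?_⟩
      calc t ^ (-β⁻¹) < T ^ (-β⁻¹) := Real.rpow_lt_rpow_of_neg hT ht hneg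
        _ = u₀ := by
          rw [← Real.rpow_mul hu₀.le, neg_mul_neg, mul_inv_cancel₀ hβ.ne', Real.rpow_one]
    calc μ {x | t < f x ^ (-β)} ≤ μ {x | f x < t ^ (-β⁻¹)} :=
          measure_mono fun x hx => Real.lt_rpow_neg_inv_of_lt_rpow_neg hβ ht0 hx
      _ ≤ ENNReal.ofReal (A * (t ^ (-β⁻¹)) ^ γ) := htail _ hu
      _ = ENNReal.ofReal (A * t ^ (-β⁻¹ * γ)) := by rw [← Real.rpow_mul ht0.le]
  have hint : Integrable (fun t => A * t ^ (-β⁻¹ * γ)) (volume.restrict (Set.Ioi T)) := by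
    refine (integrableOn_Ioi_rpow_of_lt ?_ hT).const_mul A
    rw [neg_mul, neg_lt_neg_iff, inv_mul_eq_div, one_lt_div hβ]
    exact hβγ
  -- layer cake, with the levels above `T` controlled by the tail bound
  rw [lintegral_eq_lintegral_meas_lt μ (hf0.mono fun x hx => Real.rpow_nonneg hx _)
    (hf.pow_const _), ← Set.Ioc_union_Ioi_eq_Ioi hT.le]
  refine (lt_of_le_of_lt (b := μ Set.univ * volume (Set.Ioc 0 T)
    + ∫⁻ t in Set.Ioi T, ENNReal.ofReal (A * t ^ (-β⁻¹ * γ))) ?_ ?_).ne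
  · refine (lintegral_union_le _ _ _).trans (add_le_add ?_ ?_)
    · rw [← setLIntegral_const]
      exact lintegral_mono fun t => measure_mono (Set.subset_univ _)
    · exact setLIntegral_mono (by fun_prop) hlevel
  · exact ENNReal.add_lt_top.2
      ⟨ENNReal.mul_lt_top (measure_lt_top _ _) (by simp [Real.volume_Ioc]), hint.lintegral_lt_top⟩

theorem ProbabilityTheory.IndepFun.setLIntegral_preimage_eq_mul {Ω β γ : Type*}
    [MeasurableSpace Ω] {P : Measure Ω} [MeasurableSpace β] [MeasurableSpace γ] {Y : Ω → β}
    {Z : Ω → γ} (hY : Measurable Y) (hZ : Measurable Z) (hYZ : IndepFun Y Z P) {B : Set β}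
    (hB : MeasurableSet B) {φ : γ → ℝ≥0∞} (hφ : Measurable φ) :
    ∫⁻ ω in Y ⁻¹' B, φ (Z ω) ∂P = P (Y ⁻¹' B) * ∫⁻ ω, φ (Z ω) ∂P := by
  have hind : IndepFun (B.indicator (1 : β → ℝ≥0∞) ∘ Y) (φ ∘ Z) P :=
    hYZ.comp (measurable_one.indicator hB) hφ
  calc ∫⁻ ω in Y ⁻¹' B, φ (Z ω) ∂P = ∫⁻ ω, (B.indicator (1 : β → ℝ≥0∞) ∘ Y * φ ∘ Z) ω ∂P := by
        rw [← lintegral_indicator (hY hB)]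
        congr 1 with ω
        by_cases hω : Y ω ∈ B <;> simp [hω]
    _ = P (Y ⁻¹' B) * ∫⁻ ω, φ (Z ω) ∂P := by
        rw [lintegral_mul_eq_lintegral_mul_lintegral_of_indepFun
          ((measurable_one.indicator hB).comp hY) (hφ.comp hZ) hind,
          ← lintegral_indicator_one (hY hB)]
        rfl

open Finset in
theorem Finset.sum_eq_card_filter_eq_one {ι : Type*} (s : Finset ι) {f : ι → ℝ}
    (hf : ∀ i ∈ s, f i = 0 ∨ f i = 1) : ∑ i ∈ s, f i = #(s.filter (f · = 1)) := by
  rw [card_filter, Nat.cast_sum]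
  refine sum_congr rfl fun i hi => ?_
  rcases hf i hi with h | h <;> simp [h]

open Finset in
theorem measurableSet_setOf_filter_eq_one_eq (k : ℕ) (S : Finset ℕ) :
    MeasurableSet {v : ℕ → ℝ | (range k).filter (fun j => v j = 1) = S} := by
  simp only [Finset.ext_iff, Finset.mem_filter]
  refine measurableSet_setOfPred.2 (Measurable.forall fun j => ?_)
  exact (measurable_const.and (measurableSet_setOfPred.1
    (measurableSet_eq_fun (measurable_pi_apply j) measurable_const))).iff measurable_const

section RandomSums

open Finset

variable {Ω : Type*} [MeasurableSpace Ω] {P : Measure Ω} [IsProbabilityMeasure P]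
  {X : ℕ → Ω → ℝ} {p q : ℝ} {M : ℝ≥0∞}

theorem lintegral_ofReal_rpow_neg_div_le {V : Ω → ℝ} (hV : Measurable V)
    (hVpos : ∀ᵐ ω ∂P, 0 < V ω) (hq : 0 < q) {n : ℝ} (hqn : q ≤ n)
    (hM : ∫⁻ ω, ENNReal.ofReal (V ω ^ (-(p / q))) ∂P ≤ M) :
    ∫⁻ ω, ENNReal.ofReal (V ω ^ (-p / n)) ∂P ≤ M ^ (q / n) := by
  have hn : 0 < n := hq.trans_le hqn
  calc ∫⁻ ω, ENNReal.ofReal (V ω ^ (-p / n)) ∂P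
      = ∫⁻ ω, ENNReal.ofReal (V ω ^ (-(p / q))) ^ (q / n) ∂P := by
        refine lintegral_congr_ae (hVpos.mono fun ω hω => ?_)
        dsimp only
        rw [ENNReal.ofReal_rpow_of_nonneg (Real.rpow_nonneg hω.le _) (by positivity),
          ← Real.rpow_mul hω.le]
        congr 2
        field_simp
    _ ≤ (∫⁻ ω, ENNReal.ofReal (V ω ^ (-(p / q))) ∂P) ^ (q / n) :=
        lintegral_rpow_le_rpow_lintegral (by fun_prop) (by positivity)
          ((div_le_one hn).mpr hqn)
    _ ≤ M ^ (q / n) := ENNReal.rpow_le_rpow hM (by positivity)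

theorem setLIntegral_ofReal_rpow_neg_sum_le {β : Type*} [MeasurableSpace β] {Y : Ω → β}
    (hX : ∀ j, Measurable (X j)) (hXindep : iIndepFun X P) (hXpos : ∀ j, ∀ᵐ ω ∂P, 0 < X j ω)
    (hY : Measurable Y) (hXY : IndepFun (fun ω j => X j ω) Y P) {B : Set β}
    (hB : MeasurableSet B) {S : Finset ℕ} (hS : S.Nonempty) (hp : 0 ≤ p) (hq : 0 < q)
    (hqS : q ≤ (#S : ℝ)) (hM : ∀ j, ∫⁻ ω, ENNReal.ofReal (X j ω ^ (-(p / q))) ∂P ≤ M) :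
    ∫⁻ ω in Y ⁻¹' B, ENNReal.ofReal ((∑ j ∈ S, X j ω) ^ (-p)) ∂P
      ≤ ENNReal.ofReal ((#S : ℝ) ^ (-p)) * M ^ q * P (Y ⁻¹' B) := by
  set n : ℝ := (#S : ℝ)
  have hn : 0 < n := by simp only [n]; exact_mod_cast hS.card_pos
  let g : ℝ → ℝ≥0∞ := fun x => ENNReal.ofReal (x ^ (-p / n))
  have hg : Measurable g := by fun_prop
  have hamgm : ∀ᵐ ω ∂P.restrict (Y ⁻¹' B), ENNReal.ofReal ((∑ j ∈ S, X j ω) ^ (-p))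
      ≤ ENNReal.ofReal (n ^ (-p)) * ∏ j ∈ S, g (X j ω) := by
    filter_upwards [ae_restrict_of_ae (ae_all_iff.2 hXpos)] with ω hω
    rw [← ENNReal.ofReal_prod_of_nonneg fun j _ => Real.rpow_nonneg (hω j).le _,
      ← ENNReal.ofReal_mul (by positivity)]
    exact ENNReal.ofReal_le_ofReal
      (Real.rpow_neg_sum_le_card_rpow_mul_prod hS (fun j _ => hω j) hp)
  have hprod : ∏ j ∈ S, ∫⁻ ω, g (X j ω) ∂P ≤ M ^ q := by
    calc ∏ j ∈ S, ∫⁻ ω, g (X j ω) ∂P ≤ ∏ _j ∈ S, M ^ (q / n) :=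
          prod_le_prod' fun j _ => lintegral_ofReal_rpow_neg_div_le (hX j) (hXpos j) hq hqS (hM j)
      _ = M ^ q := by
          rw [prod_const, ← ENNReal.rpow_natCast, ← ENNReal.rpow_mul, div_mul_cancel₀ _ hn.ne']
  calc ∫⁻ ω in Y ⁻¹' B, ENNReal.ofReal ((∑ j ∈ S, X j ω) ^ (-p)) ∂P
      ≤ ∫⁻ ω in Y ⁻¹' B, ENNReal.ofReal (n ^ (-p)) * ∏ j ∈ S, g (X j ω) ∂P :=
        lintegral_mono_ae hamgm
    _ = ENNReal.ofReal (n ^ (-p)) * (P (Y ⁻¹' B) * ∏ j ∈ S, ∫⁻ ω, g (X j ω) ∂P) := by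
        rw [lintegral_const_mul _ (by fun_prop),
          hXY.symm.setLIntegral_preimage_eq_mul hY (by fun_prop) hB
            (φ := fun v => ∏ j ∈ S, g (v j)) (by fun_prop)]
        congr 2
        exact lintegral_prod_eq_prod_lintegral_of_indepFun S (fun j => g ∘ X j)
          (hXindep.comp _ fun _ => hg) fun j => hg.comp (hX j)
    _ ≤ ENNReal.ofReal (n ^ (-p)) * M ^ q * P (Y ⁻¹' B) := by
        rw [mul_comm (P _), ← mul_assoc]
        gcongr

theorem setLIntegral_ofReal_rpow_neg_sum_ite_le (hX : ∀ j, Measurable (X j))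
    (hXindep : iIndepFun X P) (hXpos : ∀ j, ∀ᵐ ω ∂P, 0 < X j ω) {ε : ℕ → Ω → ℝ}
    (hε : ∀ j, Measurable (ε j)) (hεval : ∀ j ω, ε j ω = 0 ∨ ε j ω = 1)
    (hXε : IndepFun (fun ω j => X j ω) (fun ω j => ε j ω) P) (hp : 0 ≤ p) (hq : 0 < q)
    {m : ℝ} (hqm : q ≤ m) (hM : ∀ j, ∫⁻ ω, ENNReal.ofReal (X j ω ^ (-(p / q))) ∂P ≤ M)
    (k : ℕ) :
    ∫⁻ ω in {ω | m ≤ ∑ j ∈ range k, ε j ω},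
        ENNReal.ofReal ((∑ j ∈ range k, if ε j ω = 1 then X j ω else 0) ^ (-p)) ∂P
      ≤ ENNReal.ofReal (m ^ (-p)) * M ^ q := by
  set εv : Ω → ℕ → ℝ := fun ω j => ε j ω
  have hεv : Measurable εv := measurable_pi_lambda _ hε
  set active : (ℕ → ℝ) → Finset ℕ := fun v => (range k).filter (fun j => v j = 1)
  set E : Finset ℕ → Set Ω := fun S => εv ⁻¹' {v | active v = S}
  have hE : ∀ S, MeasurableSet (E S) := fun S =>
    hεv (measurableSet_setOf_filter_eq_one_eq k S)
  have hcard : ∀ ω, ∑ j ∈ range k, ε j ω = #(active (εv ω)) := fun ω =>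
    sum_eq_card_filter_eq_one _ fun j _ => hεval j ω
  have hsum : ∀ ω, ∑ j ∈ range k, (if ε j ω = 1 then X j ω else 0)
      = ∑ j ∈ active (εv ω), X j ω := fun ω => (sum_filter _ _).symm
  set 𝒮 := (range k).powerset.filter (fun S => m ≤ #S)
  have hA : {ω | m ≤ ∑ j ∈ range k, ε j ω} = ⋃ S ∈ 𝒮, E S := by
    ext ω
    simp [hcard, 𝒮, E, active, filter_subset]
  have hdisj : (𝒮 : Set (Finset ℕ)).PairwiseDisjoint E := fun S _ T _ hST =>
    Disjoint.preimage _ (Set.disjoint_left.2 fun v h1 h2 => hST (h1.symm.trans h2))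
  calc ∫⁻ ω in {ω | m ≤ ∑ j ∈ range k, ε j ω},
        ENNReal.ofReal ((∑ j ∈ range k, if ε j ω = 1 then X j ω else 0) ^ (-p)) ∂P
      = ∑ S ∈ 𝒮, ∫⁻ ω in E S, ENNReal.ofReal ((∑ j ∈ S, X j ω) ^ (-p)) ∂P := by
        rw [hA, lintegral_biUnion_finset hdisj fun S _ => hE S]
        refine sum_congr rfl fun S _ => setLIntegral_congr_fun (hE S) fun ω hω => ?_
        rw [hsum, show active (εv ω) = S from hω]
    _ ≤ ∑ S ∈ 𝒮, ENNReal.ofReal (m ^ (-p)) * M ^ q * P (E S) := by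
        refine sum_le_sum fun S hS => ?_
        have hmS : m ≤ #S := (mem_filter.1 hS).2
        have hm : 0 < m := hq.trans_le hqm
        refine (setLIntegral_ofReal_rpow_neg_sum_le hX hXindep hXpos hεv hXε
          (measurableSet_setOf_filter_eq_one_eq k S) ?_ hp hq (hqm.trans hmS) hM).trans ?_
        · exact card_pos.1 (by exact_mod_cast hm.trans_le hmS)
        · gcongr ?_ * _ * _
          exact ENNReal.ofReal_le_ofReal (Real.rpow_le_rpow_of_nonpos hm hmS (neg_nonpos.2 hp))
    _ = ENNReal.ofReal (m ^ (-p)) * M ^ q * P (⋃ S ∈ 𝒮, E S) := by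
        rw [← mul_sum, measure_biUnion_finset hdisj fun S _ => hE S]
    _ ≤ ENNReal.ofReal (m ^ (-p)) * M ^ q := mul_le_of_le_one_right' prob_le_one

end RandomSums

section UniformBall

variable {d : ℕ} {z : EuclideanSpace ℝ (Fin d)} {r : ℝ}

theorem isProbabilityMeasure_uniformBall (hr : 0 < r) :
    IsProbabilityMeasure (uniformBall d z r) := by
  constructor
  rw [uniformBall, Measure.smul_apply, Measure.restrict_apply_univ, smul_eq_mul]
  exact ENNReal.inv_mul_cancel (Metric.measure_ball_pos volume z hr).ne' measure_ball_lt_top.ne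

theorem ae_uniformBall_mem_ball : ∀ᵐ x ∂uniformBall d z r, x ∈ Metric.ball z r :=
  Measure.ae_smul_measure (ae_restrict_mem measurableSet_ball) _

theorem uniformBall_closedBall (hr : 0 < r) {ρ : ℝ} (hρ : 0 ≤ ρ) (hρr : ρ < r) :
    uniformBall d z r (Metric.closedBall z ρ) = ENNReal.ofReal ((ρ / r) ^ d) := by
  have hv0 : volume (Metric.ball (0 : EuclideanSpace ℝ (Fin d)) 1) ≠ 0 :=
    (Metric.measure_ball_pos volume _ one_pos).ne'
  have hvtop : volume (Metric.ball (0 : EuclideanSpace ℝ (Fin d)) 1) ≠ ∞ :=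
    measure_ball_lt_top.ne
  rw [uniformBall, Measure.smul_apply, Measure.restrict_apply measurableSet_closedBall,
    Set.inter_eq_left.mpr (Metric.closedBall_subset_ball hρr), smul_eq_mul,
    Measure.addHaar_ball_of_pos _ _ hr, Measure.addHaar_closedBall _ _ hρ,
    finrank_euclideanSpace_fin, ENNReal.mul_inv (.inr hvtop) (.inr hv0), mul_mul_mul_comm,
    ENNReal.inv_mul_cancel hv0 hvtop, mul_one, div_pow,
    ENNReal.ofReal_div_of_pos (by positivity), ENNReal.div_eq_inv_mul]

theorem uniformBall_setOf_sub_norm_sq_lt_le (hr : 0 < r) {s : ℝ} (hs : 0 < s) (hsr : s ≤ r ^ 2) :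
    uniformBall d z r {x | r ^ 2 - ‖x - z‖ ^ 2 < s} ≤ ENNReal.ofReal (d * s / r ^ 2) := by
  have := isProbabilityMeasure_uniformBall (d := d) (z := z) hr
  set ρ := r - s / r
  have hρ : 0 ≤ ρ := by
    simp only [ρ, sub_nonneg, div_le_iff₀ hr]; nlinarith
  have hρr : ρ < r := by simp only [ρ]; linarith [div_pos hs hr]
  -- `r ^ 2 - ‖x - z‖ ^ 2 ≥ r * (r - ‖x - z‖)` inside the ball
  have hsub : {x | r ^ 2 - ‖x - z‖ ^ 2 < s} ⊆ (Metric.closedBall z ρ)ᶜ := by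
    intro x hx
    simp only [Set.mem_ofPred_eq, Set.mem_compl_iff, Metric.mem_closedBall, dist_eq_norm,
      not_le] at hx ⊢
    by_contra! h
    have : s ≤ r * (r - ‖x - z‖) := (div_le_iff₀' hr).mp (by linarith)
    nlinarith [norm_nonneg (x - z)]
  have bernoulli : 1 - (ρ / r) ^ d ≤ d * s / r ^ 2 := by
    have hρr' : ρ / r = 1 + -(s / r ^ 2) := by simp only [ρ]; field_simp; ring
    have := one_add_mul_le_pow (a := -(s / r ^ 2)) (by
      have : s / r ^ 2 ≤ 1 := (div_le_one (by positivity)).mpr hsr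
      linarith) d
    rw [hρr']; linarith [show d * (s / r ^ 2) = d * s / r ^ 2 by ring]
  calc uniformBall d z r {x | r ^ 2 - ‖x - z‖ ^ 2 < s}
      ≤ uniformBall d z r (Metric.closedBall z ρ)ᶜ := measure_mono hsub
    _ = ENNReal.ofReal (1 - (ρ / r) ^ d) := by
        rw [prob_compl_eq_one_sub measurableSet_closedBall, uniformBall_closedBall hr hρ hρr,
          ← ENNReal.ofReal_one, ENNReal.ofReal_sub _ (by positivity)]
    _ ≤ ENNReal.ofReal (d * s / r ^ 2) := ENNReal.ofReal_le_ofReal bernoulli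

theorem ae_uniformBall_sub_norm_sq_pos : ∀ᵐ x ∂uniformBall d z r, 0 < r ^ 2 - ‖x - z‖ ^ 2 := by
  filter_upwards [ae_uniformBall_mem_ball] with x hx
  rw [Metric.mem_ball, dist_eq_norm] at hx
  nlinarith [norm_nonneg (x - z)]

theorem lintegral_uniformBall_rpow_neg_ne_top (hr : 0 < r) {β : ℝ} (hβ : 0 ≤ β)
    (hβ2 : β < 1 / 2) :
    ∫⁻ x, ENNReal.ofReal (((r ^ 2 - ‖x - z‖ ^ 2) ^ 2) ^ (-β)) ∂uniformBall d z r ≠ ∞ := by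
  have := isProbabilityMeasure_uniformBall (d := d) (z := z) hr
  refine lintegral_ofReal_rpow_neg_ne_top_of_measure_lt_le (A := d / r ^ 2) (by fun_prop)
    (ae_of_all _ fun x => sq_nonneg _) (pow_pos (pow_pos hr 2) 2) hβ hβ2 fun u hu => ?_
  have hsqrt : √u ≤ r ^ 2 := Real.sqrt_le_iff.2 ⟨by positivity, hu.2.le⟩
  calc uniformBall d z r {x | (r ^ 2 - ‖x - z‖ ^ 2) ^ 2 < u}
      ≤ uniformBall d z r {x | r ^ 2 - ‖x - z‖ ^ 2 < √u} :=
        measure_mono fun x hx => Real.lt_sqrt_of_sq_lt hx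
    _ ≤ ENNReal.ofReal (d * √u / r ^ 2) :=
        uniformBall_setOf_sub_norm_sq_lt_le hr (Real.sqrt_pos.2 hu.1) hsqrt
    _ = ENNReal.ofReal (d / r ^ 2 * u ^ (1 / 2 : ℝ)) := by
        rw [Real.sqrt_eq_rpow, mul_div_right_comm]

end UniformBall

theorem truncated_inverse_moment {Ω : Type*} [MeasurableSpace Ω] (P : Measure Ω)
    [IsProbabilityMeasure P] (d : ℕ) (z : EuclideanSpace ℝ (Fin d)) (r : ℝ) (hr : 0 < r)
    (p : ℕ) (c : ℝ) (hc : 0 < c)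
    (η : ℕ → Ω → EuclideanSpace ℝ (Fin d)) (hηmeas : ∀ j, Measurable (η j))
    (hηindep : iIndepFun η P)
    (hηdist : ∀ j, Measure.map (η j) P = uniformBall d z r)
    (ε : ℕ → Ω → ℝ) (hεmeas : ∀ j, Measurable (ε j))
    (hεval : ∀ j ω, ε j ω = 0 ∨ ε j ω = 1)
    (hindep : IndepFun (fun ω => fun j => η j ω) (fun ω => fun j => ε j ω) P) :
    ∃ C : ℝ, 0 < C ∧ ∀ k : ℕ, (2 * p + 1 : ℝ) / c ≤ k →
      (∫⁻ ω in {ω | c * k ≤ ∑ j ∈ Finset.range k, ε j ω},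
          ENNReal.ofReal
            ((∑ j ∈ Finset.range k,
                (if ε j ω = 1 then (r ^ 2 - ‖η j ω - z‖ ^ 2) ^ 2 else 0)) ^ (-(p : ℝ))) ∂P)
        ≤ ENNReal.ofReal (C * (k : ℝ) ^ (-(p : ℝ))) := by
  set q : ℝ := 2 * p + 1
  have hq : 0 < q := by positivity
  set ψsq : EuclideanSpace ℝ (Fin d) → ℝ := fun x => (r ^ 2 - ‖x - z‖ ^ 2) ^ 2
  have hψsq : Measurable ψsq := by fun_prop
  set K := ∫⁻ x, ENNReal.ofReal (ψsq x ^ (-(p / q))) ∂uniformBall d z r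
  have hK : K ≠ ∞ := lintegral_uniformBall_rpow_neg_ne_top hr (by positivity)
    (by rw [div_lt_iff₀ hq]; linarith)
  have hmoment : ∀ j, ∫⁻ ω, ENNReal.ofReal (ψsq (η j ω) ^ (-(p / q))) ∂P ≤ K := fun j => by
    rw [← lintegral_map (f := fun x => ENNReal.ofReal (ψsq x ^ (-(p / q)))) (by fun_prop)
      (hηmeas j), hηdist j]
  have hpos : ∀ j, ∀ᵐ ω ∂P, 0 < ψsq (η j ω) := fun j => by
    have h := ae_uniformBall_sub_norm_sq_pos (z := z) (r := r)
    rw [← hηdist j] at h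
    filter_upwards [ae_of_ae_map (hηmeas j).aemeasurable h] with ω hω
    positivity
  refine ⟨c ^ (-(p : ℝ)) * (K ^ q).toReal + 1, by positivity, fun k hk => ?_⟩
  have hqk : q ≤ c * k := by
    rw [div_le_iff₀ hc] at hk
    linarith
  have hφ : Measurable fun (v : ℕ → EuclideanSpace ℝ (Fin d)) j => ψsq (v j) :=
    measurable_pi_lambda _ fun j => hψsq.comp (measurable_pi_apply j)
  calc _ ≤ ENNReal.ofReal ((c * k) ^ (-(p : ℝ))) * K ^ q :=
        setLIntegral_ofReal_rpow_neg_sum_ite_le (fun j => hψsq.comp (hηmeas j))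
          (hηindep.comp (fun _ => ψsq) fun _ => hψsq) hpos hεmeas hεval
          (hindep.comp hφ measurable_id) (Nat.cast_nonneg p) hq hqk hmoment k
    _ = ENNReal.ofReal (c ^ (-(p : ℝ)) * (K ^ q).toReal * (k : ℝ) ^ (-(p : ℝ))) := by
        rw [← ENNReal.ofReal_toReal (ENNReal.rpow_ne_top_of_nonneg hq.le hK),
          ← ENNReal.ofReal_mul (by positivity), Real.mul_rpow hc.le (Nat.cast_nonneg k),
          ENNReal.toReal_ofReal ENNReal.toReal_nonneg]
        ring_nf
    _ ≤ ENNReal.ofReal ((c ^ (-(p : ℝ)) * (K ^ q).toReal + 1) * (k : ℝ) ^ (-(p : ℝ))) := by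
        gcongr
        linarith
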